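/- arXiv:2108.08715 — 2 statements merged into one kernel-verified Lean document; each statement's English description precedes it below -/
import Mathlib

section
/- Let φ_∞ : ℝⁿ → ℝ and g_∞ : ℝⁿ → ℝ^m be the corrected model cost and constraint functions, and φ_p, g_p the plant cost and constraints, all continuously differentiable. Suppose u_∞ is a KKT point of the problem min φ_∞(u) subject to g_∞(u) ≤ 0 with multiplier λ ∈ ℝ^m, and at u_∞ the matching conditions hold: g_∞(u_∞) = g_p(u_∞), ∇g_∞(u_∞) = ∇g_p(u_∞), and ∇φ_∞(u_∞) = ∇φ_p(u_∞). Then (u_∞, λ) is a KKT point of the plant problem min φ_p(u) subject to g_p(u) ≤ 0; that is, g_p(u_∞) ≤ 0, λ ≥ 0, λᵀ g_p(u_∞) = 0, and ∇φ_p(u_∞) + (∇g_p(u_∞))ᵀ λ = 0. -/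
variable {E ι : Type*} [NormedAddCommGroup E] [NormedSpace ℝ E] [Fintype ι]

def IsKKTPoint (φ : E → ℝ) (g : E → ι → ℝ) (u : E) (lam : ι → ℝ) : Prop :=
  (∀ i, g u i ≤ 0) ∧ (∀ i, 0 ≤ lam i) ∧ ∑ i, lam i * g u i = 0 ∧
    fderiv ℝ φ u + ∑ i, lam i • fderiv ℝ (fun v => g v i) u = 0

theorem IsKKTPoint.of_firstOrder_eq {φ φ' : E → ℝ} {g g' : E → ι → ℝ} {u : E} {lam : ι → ℝ}
    (h : IsKKTPoint φ g u lam) (hval : g u = g' u)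
    (hgrad : ∀ i, fderiv ℝ (fun v => g v i) u = fderiv ℝ (fun v => g' v i) u)
    (hφ : fderiv ℝ φ u = fderiv ℝ φ' u) :
    IsKKTPoint φ' g' u lam := by
  unfold IsKKTPoint at h ⊢
  simp_rw [← hval, ← hφ, ← hgrad]
  exact h

theorem kkt_matching_transfer_general
    {n m : ℕ}
    (phiInf phip : (Fin n → ℝ) → ℝ)
    (gInf gp : (Fin n → ℝ) → Fin m → ℝ)
    (uInf : Fin n → ℝ) (lam : Fin m → ℝ)
    -- KKT conditions for the corrected model problem
    (hfeas : ∀ i, gInf uInf i ≤ 0)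
    (hdual : ∀ i, 0 ≤ lam i)
    (hcomp : ∑ i, lam i * gInf uInf i = 0)
    (hstat : fderiv ℝ phiInf uInf
      + ∑ i, lam i • fderiv ℝ (fun u => gInf u i) uInf = 0)
    -- first-order matching conditions at uInf
    (hval : gInf uInf = gp uInf)
    (hgrad : ∀ i, fderiv ℝ (fun u => gInf u i) uInf
      = fderiv ℝ (fun u => gp u i) uInf)
    (hgradphi : fderiv ℝ phiInf uInf = fderiv ℝ phip uInf) :
    (∀ i, gp uInf i ≤ 0) ∧ (∀ i, 0 ≤ lam i) ∧
    (∑ i, lam i * gp uInf i = 0) ∧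
    (fderiv ℝ phip uInf + ∑ i, lam i • fderiv ℝ (fun u => gp u i) uInf = 0) :=
  IsKKTPoint.of_firstOrder_eq ⟨hfeas, hdual, hcomp, hstat⟩ hval hgrad hgradphi

/-- KKT transfer: if `uInf` is a KKT point of the corrected model problem with
multiplier `lam`, and the corrected model matches the plant to first order at
`uInf`, then `(uInf, lam)` is a KKT point of the plant problem. -/
theorem kkt_matching_transfer
    {n m : ℕ}
    (phiInf phip : (Fin n → ℝ) → ℝ)
    (gInf gp : (Fin n → ℝ) → Fin m → ℝ)
    (hphiInf : ContDiff ℝ 1 phiInf) (hphip : ContDiff ℝ 1 phip)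
    (hgInf : ∀ i, ContDiff ℝ 1 (fun u => gInf u i))
    (hgp : ∀ i, ContDiff ℝ 1 (fun u => gp u i))
    (uInf : Fin n → ℝ) (lam : Fin m → ℝ)
    -- KKT conditions for the corrected model problem
    (hfeas : ∀ i, gInf uInf i ≤ 0)
    (hdual : ∀ i, 0 ≤ lam i)
    (hcomp : ∑ i, lam i * gInf uInf i = 0)
    (hstat : fderiv ℝ phiInf uInf
      + ∑ i, lam i • fderiv ℝ (fun u => gInf u i) uInf = 0)
    -- first-order matching conditions at uInf
    (hval : gInf uInf = gp uInf)
    (hgrad : ∀ i, fderiv ℝ (fun u => gInf u i) uInf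
      = fderiv ℝ (fun u => gp u i) uInf)
    (hgradphi : fderiv ℝ phiInf uInf = fderiv ℝ phip uInf) :
    (∀ i, gp uInf i ≤ 0) ∧ (∀ i, 0 ≤ lam i) ∧
    (∑ i, lam i * gp uInf i = 0) ∧
    (fderiv ℝ phip uInf + ∑ i, lam i • fderiv ℝ (fun u => gp u i) uInf = 0) :=
  kkt_matching_transfer_general phiInf phip gInf gp uInf lam hfeas hdual hcomp hstat hval hgrad
    hgradphi
end

section
/- Let g_p : ℝⁿ → ℝ^m be the plant constraints and g, g^c : ℝⁿ → ℝ^m updated model constraints satisfying at a point u_k: g(u_k) = g^c(u_k) = g_p(u_k) and ∇g(u_k) = ∇g^c(u_k) = ∇g_p(u_k). Let filt be C¹ with filt(u_k) > 0 and define G(u) = g(u_k + filt(u)(u − u_k)). Define the cone of feasible directions of the plant at a feasible u_k as CFD_p = {d : ∇g_{p,i}(u_k)ᵀ d < 0 for all i with g_{p,i}(u_k) = 0}, and the cone CFD of the combined system {g^c ≤ 0, G ≤ 0} analogously using the gradients of g^c and G at u_k. Then CFD_p = CFD. -/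
/-!
The map `u ↦ u_k + filt u • (u - u_k)` fixes `u_k`, and the term coming from the derivative of
`filt` is multiplied by `u_k - u_k = 0`; so its derivative at `u_k` is `filt u_k • id`, and the
chain rule gives `∇G(u_k) = filt(u_k) • ∇g(u_k) = filt(u_k) • ∇g_p(u_k)`. Since `filt u_k > 0`,
rescaling does not change the sign of directional derivatives, and `G`, `g^c` carry the same
active set and gradients as `g_p`, so both cones of the combined system coincide with the plant's.
-/

open Set

section RadialRescaling

variable {𝕜 E F : Type*} [NontriviallyNormedField 𝕜]
  [NormedAddCommGroup E] [NormedSpace 𝕜 E] [NormedAddCommGroup F] [NormedSpace 𝕜 F]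

theorem hasFDerivAt_add_smul_sub {φ : E → 𝕜} {x : E} (hφ : DifferentiableAt 𝕜 φ x) :
    HasFDerivAt (fun u => x + φ u • (u - x)) (φ x • ContinuousLinearMap.id 𝕜 E) x := by
  have h : HasFDerivAt (fun u => x + φ u • (u - x))
      (φ x • ContinuousLinearMap.id 𝕜 E + (fderiv 𝕜 φ x).smulRight (x - x)) x :=
    (hφ.hasFDerivAt.smul ((hasFDerivAt_id x).sub_const x)).const_add x
  rwa [sub_self, ContinuousLinearMap.smulRight_zero, add_zero] at h

theorem HasFDerivAt.comp_add_smul_sub {g : E → F} {g' : E →L[𝕜] F} {φ : E → 𝕜} {x : E}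
    (hg : HasFDerivAt g g' x) (hφ : DifferentiableAt 𝕜 φ x) :
    HasFDerivAt (fun u => g (x + φ u • (u - x))) (φ x • g') x := by
  have hg' : HasFDerivAt g g' (x + φ x • (x - x)) := by
    rwa [sub_self, smul_zero, add_zero]
  have h := hg'.comp x (hasFDerivAt_add_smul_sub hφ)
  rwa [ContinuousLinearMap.comp_smul, ContinuousLinearMap.comp_id] at h

end RadialRescaling

section FeasibleDirections

variable {ι E : Type*} [NormedAddCommGroup E] [NormedSpace ℝ E]

def feasibleDirections (c : ι → ℝ) (D : ι → E →L[ℝ] ℝ) : Set E :=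
  {d | ∀ i, c i = 0 → D i d < 0}

theorem feasibleDirections_smul {a : ℝ} (ha : 0 < a) (c : ι → ℝ) (D : ι → E →L[ℝ] ℝ) :
    feasibleDirections c (fun i => a • D i) = feasibleDirections c D := by
  ext d
  exact forall_congr' fun i => imp_congr_right fun _ => smul_neg_iff_of_pos_left ha

end FeasibleDirections

theorem cones_of_feasible_directions_eq_general
    {n m : ℕ}
    (gp g gc : (Fin n → ℝ) → Fin m → ℝ)
    (hg : ∀ i, ContDiff ℝ 1 (fun u => g u i))
    (filt : (Fin n → ℝ) → ℝ) (hfilt : ContDiff ℝ 1 filt)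
    (uk : Fin n → ℝ)
    (hfiltpos : 0 < filt uk)
    (hval : ∀ i, g uk i = gp uk i ∧ gc uk i = gp uk i)
    (hgrad : ∀ i,
      fderiv ℝ (fun u => g u i) uk = fderiv ℝ (fun u => gp u i) uk ∧
      fderiv ℝ (fun u => gc u i) uk = fderiv ℝ (fun u => gp u i) uk) :
    let G : (Fin n → ℝ) → Fin m → ℝ :=
      fun u => g (uk + filt u • (u - uk))
    {d : Fin n → ℝ | ∀ i, gp uk i = 0 →
        fderiv ℝ (fun u => gp u i) uk d < 0} =
    {d : Fin n → ℝ |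
        (∀ i, gc uk i = 0 → fderiv ℝ (fun u => gc u i) uk d < 0) ∧
        (∀ i, G uk i = 0 → fderiv ℝ (fun u => G u i) uk d < 0)} := by
  intro G
  have hG_val : G uk = gp uk := funext fun i => by simp [G, (hval i).1]
  have hG_grad (i : Fin m) :
      fderiv ℝ (fun u => G u i) uk = filt uk • fderiv ℝ (fun u => gp u i) uk := by
    rw [← (hgrad i).1]
    exact (((hg i).differentiable one_ne_zero uk).hasFDerivAt.comp_add_smul_sub
      (hfilt.differentiable one_ne_zero uk)).fderiv
  have hgc_val : gc uk = gp uk := funext fun i => (hval i).2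
  have hgc_grad : (fun i => fderiv ℝ (fun u => gc u i) uk) =
      fun i => fderiv ℝ (fun u => gp u i) uk := funext fun i => (hgrad i).2
  change feasibleDirections (gp uk) (fun i => fderiv ℝ (fun u => gp u i) uk) =
    feasibleDirections (gc uk) (fun i => fderiv ℝ (fun u => gc u i) uk) ∩
      feasibleDirections (G uk) (fun i => fderiv ℝ (fun u => G u i) uk)
  rw [hgc_val, hgc_grad, hG_val, funext hG_grad, feasibleDirections_smul hfiltpos, inter_self]

/-- Equality of cones of feasible directions: if the updated model constraints
`g`, their convexifications `gc` and the plant constraints `gp` agree in value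
and gradient at `u_k`, and `filt u_k > 0`, then the cone of feasible
directions of the plant at the feasible point `u_k` equals the cone of
feasible directions of the combined system `{gc ≤ 0, G ≤ 0}` where
`G u = g (u_k + filt u • (u − u_k))`. -/
theorem cones_of_feasible_directions_eq
    {n m : ℕ}
    (gp g gc : (Fin n → ℝ) → Fin m → ℝ)
    (hgp : ∀ i, ContDiff ℝ 1 (fun u => gp u i))
    (hg : ∀ i, ContDiff ℝ 1 (fun u => g u i))
    (hgc : ∀ i, ContDiff ℝ 1 (fun u => gc u i))
    (filt : (Fin n → ℝ) → ℝ) (hfilt : ContDiff ℝ 1 filt)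
    (uk : Fin n → ℝ)
    (hfeas : ∀ i, gp uk i ≤ 0)
    (hfiltpos : 0 < filt uk)
    (hval : ∀ i, g uk i = gp uk i ∧ gc uk i = gp uk i)
    (hgrad : ∀ i,
      fderiv ℝ (fun u => g u i) uk = fderiv ℝ (fun u => gp u i) uk ∧
      fderiv ℝ (fun u => gc u i) uk = fderiv ℝ (fun u => gp u i) uk) :
    let G : (Fin n → ℝ) → Fin m → ℝ :=
      fun u => g (uk + filt u • (u - uk))
    {d : Fin n → ℝ | ∀ i, gp uk i = 0 →
        fderiv ℝ (fun u => gp u i) uk d < 0} =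
    {d : Fin n → ℝ |
        (∀ i, gc uk i = 0 → fderiv ℝ (fun u => gc u i) uk d < 0) ∧
        (∀ i, G uk i = 0 → fderiv ℝ (fun u => G u i) uk d < 0)} :=
  cones_of_feasible_directions_eq_general gp g gc hg filt hfilt uk hfiltpos hval hgrad
end
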